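/- Let d ≥ 1 and let L be a finite simple graph whose vertex set is the disjoint union of nonempty sets A, B and a set P = {p_1, ..., p_{d-1}} of d - 1 further vertices, such that: the induced subgraphs L[A] and L[B] are well-f-covered; there exist x ∈ A and y ∈ B such that the edges of L not lying inside A and not lying inside B are exactly the edges of the path x, p_1, p_2, ..., p_{d-1}, y (when d = 1 this is the single edge xy). Then L is well-f-covered and f(L) = f(L[A]) + f(L[B]) + d - 1. -/

import Mathlib

/-- `X` induces a forest in `G`: the subgraph induced by `X` is acyclic. -/
def IsInducedForest {V : Type*} (G : SimpleGraph V) (X : Finset V) : Prop :=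
  (G.induce (X : Set V)).IsAcyclic

/-- `X` is a maximal induced forest of `G`. -/
def IsMaximalInducedForest {V : Type*} (G : SimpleGraph V) (X : Finset V) : Prop :=
  IsInducedForest G X ∧ ∀ Y : Finset V, X ⊂ Y → ¬ IsInducedForest G Y

/-- The forest number of `G`: maximum cardinality of an induced forest. -/
noncomputable def forestNum {V : Type*} (G : SimpleGraph V) : ℕ :=
  sSup {n | ∃ X : Finset V, IsInducedForest G X ∧ X.card = n}

/-- `G` is well-f-covered: all maximal induced forests have the same cardinality. -/
def WellFCovered {V : Type*} (G : SimpleGraph V) : Prop :=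
  ∀ X Y : Finset V, IsMaximalInducedForest G X → IsMaximalInducedForest G Y →
    X.card = Y.card

def IsIndepFinset {V : Type*} (G : SimpleGraph V) (X : Finset V) : Prop :=
  ∀ ⦃u⦄, u ∈ X → ∀ ⦃v⦄, v ∈ X → ¬ G.Adj u v

def IsMaximalIndepSet {V : Type*} (G : SimpleGraph V) (X : Finset V) : Prop :=
  IsIndepFinset G X ∧ ∀ Y : Finset V, X ⊂ Y → ¬ IsIndepFinset G Y

noncomputable def indepNum {V : Type*} (G : SimpleGraph V) : ℕ :=
  sSup {n | ∃ X : Finset V, IsIndepFinset G X ∧ X.card = n}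

def WellCovered {V : Type*} (G : SimpleGraph V) : Prop :=
  ∀ X Y : Finset V, IsMaximalIndepSet G X → IsMaximalIndepSet G Y → X.card = Y.card

/-- The join of two graphs on disjoint vertex sets. -/
def joinGraph {V W : Type*} (G : SimpleGraph V) (H : SimpleGraph W) :
    SimpleGraph (V ⊕ W) where
  Adj a b :=
    match a, b with
    | Sum.inl u, Sum.inl v => G.Adj u v
    | Sum.inr u, Sum.inr v => H.Adj u v
    | Sum.inl _, Sum.inr _ => True
    | Sum.inr _, Sum.inl _ => True
  symm := ⟨by rintro (u|u) (v|v) h <;> first | exact h.symm | trivial⟩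
  loopless := ⟨by rintro (u|u) h <;> exact SimpleGraph.irrefl _ h⟩

/-!
Every edge of the path is a bridge, so no cycle of `L` uses it; a cycle therefore stays inside
`A` or inside `B`. Hence `X` induces a forest iff `X ∩ A` and `X ∩ B` do. Consequently a maximal
induced forest contains all interior path vertices, and its traces on `A` and `B` are maximal
induced forests of `L[A]` and `L[B]`, which by well-f-coveredness have sizes `f(L[A])` and
`f(L[B])`.
-/

open SimpleGraph

section Walks

variable {V : Type*} {G : SimpleGraph V}

lemma SimpleGraph.Walk.mem_of_mem_support_of_forall_edges {S : Set V} {u v : V}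
    (p : G.Walk u v) (hu : u ∈ S) (hp : ∀ x y, s(x, y) ∈ p.edges → x ∈ S → y ∈ S) :
    ∀ x ∈ p.support, x ∈ S := by
  induction p with
  | nil => simpa
  | cons hadj q ih =>
    simp only [Walk.support_cons, List.mem_cons, forall_eq_or_imp]
    exact ⟨hu, ih (hp _ _ (by simp) hu) fun x y hxy => hp x y (by simp [hxy])⟩

lemma SimpleGraph.Walk.IsCycle.support_subset_or {A B : Set V} (hAB : Disjoint A B) {u : V}
    {c : G.Walk u u} (hc : c.IsCycle)
    (hedges : ∀ x y, s(x, y) ∈ c.edges → (x ∈ A ∧ y ∈ A) ∨ (x ∈ B ∧ y ∈ B)) :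
    (∀ x ∈ c.support, x ∈ A) ∨ (∀ x ∈ c.support, x ∈ B) := by
  cases c with
  | nil => exact absurd rfl hc.ne_nil
  | @cons _ w _ hadj q =>
    have stays {S T : Set V} (hST : Disjoint S T)
        (h : ∀ x y, s(x, y) ∈ (q.cons hadj).edges → (x ∈ S ∧ y ∈ S) ∨ (x ∈ T ∧ y ∈ T))
        (hu : u ∈ S) : ∀ x ∈ (q.cons hadj).support, x ∈ S :=
      Walk.mem_of_mem_support_of_forall_edges _ hu fun x y hxy hx =>
        ((h x y hxy).resolve_right fun hT => hST.notMem_of_mem_left hx hT.1).2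
    rcases hedges u w (by simp) with ⟨hu, -⟩ | ⟨hu, -⟩
    · exact .inl (stays hAB hedges hu)
    · exact .inr (stays hAB.symm (fun x y hxy => (hedges x y hxy).symm) hu)

lemma SimpleGraph.isBridge_of_forall_adj_mem {u v : V} (S : Set V) (hu : u ∈ S) (hv : v ∉ S)
    (hS : ∀ x y, G.Adj x y → s(x, y) ≠ s(u, v) → x ∈ S → y ∈ S) : G.IsBridge s(u, v) := by
  rintro ⟨p⟩
  obtain ⟨d, -, hd, hd'⟩ := p.exists_boundary_dart S hu hv
  obtain ⟨hadj, hne⟩ := deleteEdges_adj.mp d.adj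
  exact hd' (hS _ _ hadj (by simpa using hne) hd)

end Walks

section InducedForests

variable {V : Type*} {G : SimpleGraph V}

lemma isInducedForest_iff_forall_isCycle {X : Finset V} :
    IsInducedForest G X ↔ ∀ u (c : G.Walk u u), c.IsCycle → ¬ ∀ x ∈ c.support, x ∈ X := by
  constructor
  · intro hX u c hc hcX
    refine hX (c.induce _ hcX) ?_
    rw [← Walk.isCycle_map_iff_of_injective (f := (Embedding.induce _).toHom) Subtype.val_injective,
      Walk.map_induce]
    exact hc
  · intro h u c hc
    refine h _ _ (hc.map (f := (Embedding.induce _).toHom) Subtype.val_injective) fun x hx => ?_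
    obtain ⟨y, -, rfl⟩ := List.mem_map.mp ((Walk.support_map _ _).symm ▸ hx)
    exact y.2

lemma isInducedForest_empty : IsInducedForest G ∅ :=
  isInducedForest_iff_forall_isCycle.mpr fun _ _ _ h =>
    by simpa using h _ (Walk.start_mem_support _)

lemma IsInducedForest.subset {X Y : Finset V} (hXY : X ⊆ Y) (hY : IsInducedForest G Y) :
    IsInducedForest G X :=
  isInducedForest_iff_forall_isCycle.mpr fun u c hc hcX =>
    isInducedForest_iff_forall_isCycle.mp hY u c hc fun x hx => hXY (hcX x hx)

lemma isInducedForest_induce_subtype_iff {S : Set V} [DecidablePred (· ∈ S)] {X : Finset V}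
    (hXS : ↑X ⊆ S) : IsInducedForest (G.induce S) (X.subtype (· ∈ S)) ↔ IsInducedForest G X :=
  Iso.isAcyclic_iff
    { toFun a := ⟨a.1.1, Finset.mem_subtype.mp a.2⟩
      invFun v := ⟨⟨v.1, hXS v.2⟩, Finset.mem_subtype.mpr v.2⟩
      left_inv _ := rfl
      right_inv _ := rfl
      map_rel_iff' := Iff.rfl }

variable [Finite V]

lemma IsInducedForest.exists_isMaximalInducedForest_superset {X : Finset V}
    (hX : IsInducedForest G X) : ∃ Y, X ⊆ Y ∧ IsMaximalInducedForest G Y := by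
  obtain ⟨Y, hXY, hY, hmax⟩ :=
    (Set.toFinite {Y : Finset V | IsInducedForest G Y}).exists_le_maximal hX
  exact ⟨Y, hXY, hY, fun Z hYZ hZ => hYZ.not_subset (hmax hZ hYZ.subset)⟩

lemma bddAbove_forestCards :
    BddAbove {n | ∃ X : Finset V, IsInducedForest G X ∧ X.card = n} := by
  have := Fintype.ofFinite V
  exact ⟨Fintype.card V, by rintro n ⟨X, -, rfl⟩; exact X.card_le_univ⟩

lemma IsInducedForest.card_le_forestNum {X : Finset V} (hX : IsInducedForest G X) :
    X.card ≤ forestNum G :=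
  le_csSup bddAbove_forestCards ⟨X, hX, rfl⟩

lemma exists_isInducedForest_card_eq_forestNum :
    ∃ X : Finset V, IsInducedForest G X ∧ X.card = forestNum G :=
  Nat.sSup_mem (s := {n | ∃ X : Finset V, IsInducedForest G X ∧ X.card = n})
    ⟨0, ∅, isInducedForest_empty, rfl⟩ bddAbove_forestCards

lemma WellFCovered.card_eq_forestNum (hG : WellFCovered G) {X : Finset V}
    (hX : IsMaximalInducedForest G X) : X.card = forestNum G := by
  obtain ⟨M, hM, hMcard⟩ := exists_isInducedForest_card_eq_forestNum (G := G)
  obtain ⟨Y, hMY, hY⟩ := hM.exists_isMaximalInducedForest_superset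
  rw [hG X Y hX hY]
  exact le_antisymm hY.1.card_le_forestNum (hMcard ▸ Finset.card_le_card hMY)

lemma wellFCovered_and_forestNum_eq {n : ℕ} (hle : ∀ X, IsInducedForest G X → X.card ≤ n)
    (hmax : ∀ X, IsMaximalInducedForest G X → X.card = n) :
    WellFCovered G ∧ forestNum G = n := by
  refine ⟨fun X Y hX hY => (hmax X hX).trans (hmax Y hY).symm, le_antisymm ?_ ?_⟩
  · obtain ⟨X, hX, hXcard⟩ := exists_isInducedForest_card_eq_forestNum (G := G)
    exact hXcard ▸ hle X hX
  · obtain ⟨Y, -, hY⟩ := (isInducedForest_empty (G := G)).exists_isMaximalInducedForest_superset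
    exact hmax Y hY ▸ hY.1.card_le_forestNum

lemma IsInducedForest.card_le_forestNum_induce {S : Set V} {X : Finset V} (hXS : ↑X ⊆ S)
    (hX : IsInducedForest G X) : X.card ≤ forestNum (G.induce S) := by
  classical
  have := ((isInducedForest_induce_subtype_iff hXS).mpr hX).card_le_forestNum
  rwa [Finset.card_subtype, Finset.filter_true_of_mem fun x hx => hXS hx] at this

lemma WellFCovered.card_eq_forestNum_induce {S : Set V} (hS : WellFCovered (G.induce S))
    {X : Finset V} (hXS : ↑X ⊆ S) (hX : IsInducedForest G X)
    (hmax : ∀ Y : Finset V, X ⊂ Y → ↑Y ⊆ S → ¬ IsInducedForest G Y) :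
    X.card = forestNum (G.induce S) := by
  classical
  have hmax' : IsMaximalInducedForest (G.induce S) (X.subtype (· ∈ S)) := by
    refine ⟨(isInducedForest_induce_subtype_iff hXS).mpr hX, fun Y hXY hY => ?_⟩
    have hYS : ↑(Y.map (Function.Embedding.subtype _)) ⊆ S := Finset.map_subtype_subset Y
    have hY_eq : (Y.map (Function.Embedding.subtype _)).subtype (· ∈ S) = Y := by ext; simp
    have hXY' := Finset.map_ssubset_map (f := Function.Embedding.subtype (· ∈ S)) |>.mpr hXY
    rw [Finset.subtype_map_of_mem fun x hx => hXS hx] at hXY'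
    rw [← hY_eq, isInducedForest_induce_subtype_iff hYS] at hY
    exact hmax _ hXY' hYS hY
  have := hS.card_eq_forestNum hmax'
  rwa [Finset.card_subtype, Finset.filter_true_of_mem fun x hx => hXS hx] at this

end InducedForests

section CyclesWithin

variable {V : Type*} {G : SimpleGraph V} {A B : Finset V}

def CyclesWithin (G : SimpleGraph V) (A B : Finset V) : Prop :=
  ∀ u (c : G.Walk u u), c.IsCycle → (∀ x ∈ c.support, x ∈ A) ∨ (∀ x ∈ c.support, x ∈ B)

lemma CyclesWithin.symm (h : CyclesWithin G A B) : CyclesWithin G B A :=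
  fun u c hc => (h u c hc).symm

variable [DecidableEq V]

lemma CyclesWithin.isInducedForest_iff (h : CyclesWithin G A B) (X : Finset V) :
    IsInducedForest G X ↔ IsInducedForest G (X ∩ A) ∧ IsInducedForest G (X ∩ B) := by
  refine ⟨fun hX => ⟨hX.subset Finset.inter_subset_left, hX.subset Finset.inter_subset_left⟩,
    fun ⟨hXA, hXB⟩ => isInducedForest_iff_forall_isCycle.mpr fun u c hc hcX => ?_⟩
  rcases h u c hc with hcA | hcB
  · exact isInducedForest_iff_forall_isCycle.mp hXA u c hc fun x hx =>
      Finset.mem_inter.mpr ⟨hcX x hx, hcA x hx⟩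
  · exact isInducedForest_iff_forall_isCycle.mp hXB u c hc fun x hx =>
      Finset.mem_inter.mpr ⟨hcX x hx, hcB x hx⟩

lemma CyclesWithin.mem_of_isMaximalInducedForest (h : CyclesWithin G A B) {X : Finset V}
    (hX : IsMaximalInducedForest G X) {v : V} (hvA : v ∉ A) (hvB : v ∉ B) : v ∈ X := by
  by_contra hvX
  refine hX.2 _ (Finset.ssubset_insert hvX) ?_
  rw [h.isInducedForest_iff, Finset.insert_inter_of_notMem hvA,
    Finset.insert_inter_of_notMem hvB, ← h.isInducedForest_iff]
  exact hX.1

lemma CyclesWithin.not_isInducedForest_of_inter_ssubset (h : CyclesWithin G A B)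
    (hAB : Disjoint A B) {X : Finset V} (hX : IsMaximalInducedForest G X) {Y : Finset V}
    (hXY : X ∩ A ⊂ Y) (hYA : Y ⊆ A) : ¬ IsInducedForest G Y := by
  intro hY
  obtain ⟨a, haY, haXA⟩ := Finset.exists_of_ssubset hXY
  have haX : a ∉ X := fun haX => haXA (Finset.mem_inter.mpr ⟨haX, hYA haY⟩)
  have hA : (X ∪ Y) ∩ A = Y := by
    rw [Finset.union_inter_distrib_right, Finset.inter_eq_left.mpr hYA]
    exact Finset.union_eq_right.mpr hXY.subset
  have hB : (X ∪ Y) ∩ B = X ∩ B := by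
    rw [Finset.union_inter_distrib_right,
      Finset.disjoint_iff_inter_eq_empty.mp (hAB.mono_left hYA), Finset.union_empty]
  refine hX.2 (X ∪ Y) ((Finset.ssubset_iff_of_subset Finset.subset_union_left).mpr
    ⟨a, Finset.mem_union_right _ haY, haX⟩) ?_
  rw [h.isInducedForest_iff, hA, hB]
  exact ⟨hY, ((h.isInducedForest_iff X).mp hX.1).2⟩

lemma card_eq_card_inter_add_card_inter_add_card_sdiff (hAB : Disjoint A B) (X : Finset V) :
    X.card = (X ∩ A).card + (X ∩ B).card + (X \ (A ∪ B)).card := by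
  rw [← Finset.card_inter_add_card_sdiff X (A ∪ B), Finset.inter_union_distrib_left,
    Finset.card_union_of_disjoint (hAB.mono Finset.inter_subset_right Finset.inter_subset_right)]

variable [Fintype V]

theorem CyclesWithin.wellFCovered_and_forestNum_eq (h : CyclesWithin G A B)
    (hAB : Disjoint A B) (hA : WellFCovered (G.induce A)) (hB : WellFCovered (G.induce B)) :
    WellFCovered G ∧
      forestNum G = forestNum (G.induce A) + forestNum (G.induce B) + (A ∪ B)ᶜ.card := by
  have hXA (X : Finset V) : ↑(X ∩ A) ⊆ (A : Set V) := by simp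
  have hXB (X : Finset V) : ↑(X ∩ B) ⊆ (B : Set V) := by simp
  apply _root_.wellFCovered_and_forestNum_eq
  · intro X hX
    rw [card_eq_card_inter_add_card_inter_add_card_sdiff hAB X]
    gcongr
    · exact (hX.subset Finset.inter_subset_left).card_le_forestNum_induce (hXA X)
    · exact (hX.subset Finset.inter_subset_left).card_le_forestNum_induce (hXB X)
    · exact fun x hx => Finset.mem_compl.mpr (Finset.mem_sdiff.mp hx).2
  · intro X hX
    have hrest : X \ (A ∪ B) = (A ∪ B)ᶜ := by
      ext v
      simp only [Finset.mem_sdiff, Finset.mem_compl, Finset.mem_union, not_or]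
      exact ⟨And.right, fun hv => ⟨h.mem_of_isMaximalInducedForest hX hv.1 hv.2, hv⟩⟩
    rw [card_eq_card_inter_add_card_inter_add_card_sdiff hAB X, hrest,
      hA.card_eq_forestNum_induce (hXA X) (hX.1.subset Finset.inter_subset_left)
        fun Y hXY hYA => h.not_isInducedForest_of_inter_ssubset hAB hX hXY (by exact_mod_cast hYA),
      hB.card_eq_forestNum_induce (hXB X) (hX.1.subset Finset.inter_subset_left)
        fun Y hXY hYB =>
          h.symm.not_isInducedForest_of_inter_ssubset hAB.symm hX hXY (by exact_mod_cast hYB)]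

end CyclesWithin

section PathGluing

variable {V : Type*} {L : SimpleGraph V} {d : ℕ} {A B : Finset V} {w : Fin (d + 1) → V}

lemma pathVertex_mem_iff (hAB : Disjoint A B) (hw0 : w 0 ∈ A) (hwd : w (Fin.last d) ∈ B)
    (hint : ∀ i : Fin (d + 1), 0 < (i : ℕ) → (i : ℕ) < d → w i ∉ A ∧ w i ∉ B)
    (j : Fin (d + 1)) : (w j ∈ A ↔ j = 0) ∧ (w j ∈ B ↔ j = Fin.last d) := by
  rcases eq_or_ne j 0 with rfl | h0
  · have h0B : w 0 ∉ B := hAB.notMem_of_mem_left_finset hw0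
    exact ⟨iff_of_true hw0 rfl, iff_of_false h0B fun h => h0B (h ▸ hwd)⟩
  rcases eq_or_ne j (Fin.last d) with rfl | hl
  · exact ⟨iff_of_false (hAB.notMem_of_mem_right_finset hwd) h0, iff_of_true hwd rfl⟩
  have hj := hint j (Fin.pos_iff_ne_zero.mpr h0) (Fin.lt_last_iff_ne_last.mpr hl)
  exact ⟨iff_of_false hj.1 h0, iff_of_false hj.2 hl⟩

variable [DecidableEq V]

lemma isBridge_pathEdge (hAB : Disjoint A B) (hw : Function.Injective w)
    (hwA : ∀ j, w j ∈ A ↔ j = 0) (hwB : ∀ j, w j ∈ B ↔ j = Fin.last d)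
    (hedges : ∀ u v : V, ¬(u ∈ A ∧ v ∈ A) → ¬(u ∈ B ∧ v ∈ B) →
      (L.Adj u v ↔ ∃ i : Fin d,
        (u = w i.castSucc ∧ v = w i.succ) ∨ (u = w i.succ ∧ v = w i.castSucc)))
    (i : Fin d) : L.IsBridge s(w i.castSucc, w i.succ) := by
  -- `A` together with the path up to `w i.castSucc`: the edge `i` is the only one leaving it.
  set S : Set V := {v | v ∈ A ∨ ∃ j : Fin (d + 1), (j : ℕ) ≤ i ∧ w j = v}
  have hwS (j : Fin (d + 1)) : w j ∈ S ↔ (j : ℕ) ≤ i := by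
    refine ⟨?_, fun hj => .inr ⟨j, hj, rfl⟩⟩
    rintro (hjA | ⟨k, hk, hkj⟩)
    · simp [(hwA j).mp hjA]
    · exact hw hkj ▸ hk
  have hBS (x : V) (hxB : x ∈ B) : x ∉ S := by
    rintro (hxA | ⟨k, hk, rfl⟩)
    · exact hAB.notMem_of_mem_left_finset hxA hxB
    · have := (hwB k).mp hxB ▸ hk
      simp only [Fin.val_last] at this
      omega
  refine isBridge_of_forall_adj_mem S ((hwS _).mpr (by simp)) (by simp [hwS]) ?_
  intro x y hxy hne hx
  by_cases hxyA : x ∈ A ∧ y ∈ A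
  · exact .inl hxyA.2
  by_cases hxyB : x ∈ B ∧ y ∈ B
  · exact absurd hx (hBS x hxyB.1)
  obtain ⟨k, hk⟩ := (hedges x y hxyA hxyB).mp hxy
  have hki : (k : ℕ) ≠ i := fun h => by
    rcases Fin.ext h, hk with ⟨rfl, ⟨rfl, rfl⟩ | ⟨rfl, rfl⟩⟩
    · exact hne rfl
    · exact hne Sym2.eq_swap
  rcases hk with ⟨rfl, rfl⟩ | ⟨rfl, rfl⟩ <;>
    simp only [hwS, Fin.val_succ, Fin.val_castSucc] at hx ⊢ <;> omega

lemma cyclesWithin_of_pathEdges (hAB : Disjoint A B) (hw : Function.Injective w)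
    (hwA : ∀ j, w j ∈ A ↔ j = 0) (hwB : ∀ j, w j ∈ B ↔ j = Fin.last d)
    (hedges : ∀ u v : V, ¬(u ∈ A ∧ v ∈ A) → ¬(u ∈ B ∧ v ∈ B) →
      (L.Adj u v ↔ ∃ i : Fin d,
        (u = w i.castSucc ∧ v = w i.succ) ∨ (u = w i.succ ∧ v = w i.castSucc))) :
    CyclesWithin L A B := by
  intro u c hc
  refine hc.support_subset_or (A := A) (B := B) (by exact_mod_cast hAB) fun x y hxy => ?_
  by_contra hout
  obtain ⟨hxyA, hxyB⟩ := not_or.mp hout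
  obtain ⟨k, hk⟩ := (hedges x y hxyA hxyB).mp (c.adj_of_mem_edges hxy)
  refine (isBridge_pathEdge hAB hw hwA hwB hedges k).notMem_edges_of_isCycle hc ?_
  rcases hk with ⟨rfl, rfl⟩ | ⟨rfl, rfl⟩
  · exact hxy
  · rwa [Sym2.eq_swap]

lemma card_compl_union_of_path [Fintype V] (hw : Function.Injective w)
    (hwA : ∀ j, w j ∈ A ↔ j = 0) (hwB : ∀ j, w j ∈ B ↔ j = Fin.last d)
    (hcover : ∀ v : V, v ∈ A ∨ v ∈ B ∨ ∃ i : Fin (d + 1), v = w i) :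
    (A ∪ B)ᶜ.card = d - 1 := by
  have hinterior : (A ∪ B)ᶜ = (Finset.Ioo 0 (Fin.last d)).image w := by
    ext v
    simp only [Finset.mem_compl, Finset.mem_union, not_or, Finset.mem_image, Finset.mem_Ioo,
      Fin.pos_iff_ne_zero, Fin.lt_last_iff_ne_last]
    constructor
    · rintro ⟨hvA, hvB⟩
      rcases hcover v with hv | hv | ⟨j, rfl⟩
      · exact absurd hv hvA
      · exact absurd hv hvB
      · exact ⟨j, ⟨mt (hwA j).mpr hvA, mt (hwB j).mpr hvB⟩, rfl⟩
    · rintro ⟨j, ⟨h0, hl⟩, rfl⟩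
      exact ⟨mt (hwA j).mp h0, mt (hwB j).mp hl⟩
  rw [hinterior, Finset.card_image_of_injective _ hw, Fin.card_Ioo]
  simp

end PathGluing

theorem stmt8_general {V : Type*} [Fintype V] [DecidableEq V] (L : SimpleGraph V)
    (d : ℕ) (hd : 1 ≤ d) (A B : Finset V)
    (hdisj : Disjoint A B)
    (w : Fin (d + 1) → V) (hw : Function.Injective w)
    (hw0 : w 0 ∈ A) (hwd : w (Fin.last d) ∈ B)
    (hint : ∀ i : Fin (d + 1), 0 < (i : ℕ) → (i : ℕ) < d → w i ∉ A ∧ w i ∉ B)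
    (hcover : ∀ v : V, v ∈ A ∨ v ∈ B ∨ ∃ i : Fin (d + 1), v = w i)
    (hwA : WellFCovered (L.induce (A : Set V)))
    (hwB : WellFCovered (L.induce (B : Set V)))
    (hedges : ∀ u v : V, ¬(u ∈ A ∧ v ∈ A) → ¬(u ∈ B ∧ v ∈ B) →
      (L.Adj u v ↔ ∃ i : Fin d,
        (u = w i.castSucc ∧ v = w i.succ) ∨ (u = w i.succ ∧ v = w i.castSucc))) :
    WellFCovered L ∧
      forestNum L =
        forestNum (L.induce (A : Set V)) + forestNum (L.induce (B : Set V)) + d - 1 := by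
  have hmemA (j : Fin (d + 1)) := (pathVertex_mem_iff hdisj hw0 hwd hint j).1
  have hmemB (j : Fin (d + 1)) := (pathVertex_mem_iff hdisj hw0 hwd hint j).2
  have hcycles := cyclesWithin_of_pathEdges hdisj hw hmemA hmemB hedges
  obtain ⟨hwell, hforestNum⟩ := hcycles.wellFCovered_and_forestNum_eq hdisj hwA hwB
  refine ⟨hwell, ?_⟩
  rw [hforestNum, card_compl_union_of_path hw hmemA hmemB hcover]
  omega

/-- Let `d ≥ 1` and let the vertex set of `L` be the disjoint union of
nonempty sets `A`, `B` and the `d - 1` interior vertices of a path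
`x = w 0, w 1, ..., w d = y` with `x ∈ A`, `y ∈ B`, where `L[A]` and `L[B]` are
well-f-covered and the edges of `L` not lying inside `A` nor inside `B` are exactly
the edges of the path. Then `L` is well-f-covered and
`f(L) = f(L[A]) + f(L[B]) + d - 1`. -/
theorem stmt8 {V : Type*} [Fintype V] [DecidableEq V] (L : SimpleGraph V)
    (d : ℕ) (hd : 1 ≤ d) (A B : Finset V)
    (hA : A.Nonempty) (hB : B.Nonempty) (hdisj : Disjoint A B)
    (w : Fin (d + 1) → V) (hw : Function.Injective w)
    (hw0 : w 0 ∈ A) (hwd : w (Fin.last d) ∈ B)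
    (hint : ∀ i : Fin (d + 1), 0 < (i : ℕ) → (i : ℕ) < d → w i ∉ A ∧ w i ∉ B)
    (hcover : ∀ v : V, v ∈ A ∨ v ∈ B ∨ ∃ i : Fin (d + 1), v = w i)
    (hwA : WellFCovered (L.induce (A : Set V)))
    (hwB : WellFCovered (L.induce (B : Set V)))
    (hedges : ∀ u v : V, ¬(u ∈ A ∧ v ∈ A) → ¬(u ∈ B ∧ v ∈ B) →
      (L.Adj u v ↔ ∃ i : Fin d,
        (u = w i.castSucc ∧ v = w i.succ) ∨ (u = w i.succ ∧ v = w i.castSucc))) :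
    WellFCovered L ∧
      forestNum L =
        forestNum (L.induce (A : Set V)) + forestNum (L.induce (B : Set V)) + d - 1 :=
  stmt8_general L d hd A B hdisj w hw hw0 hwd hint hcover hwA hwB hedges
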